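/- Let A and B be symmetric positive definite real m×m matrices, and suppose ρ(v − ṽ)/Δt satisfies A·((v − ṽ)ρ/Δt) = B·(σ_old − σ_new) for vectors v, ṽ, σ_old, σ_new ∈ ℝ^m, ρ, Δt > 0. Then Δt·⟨σ_old, v − ṽ⟩_B = (Δt²/(2ρ))(⟨σ_old, σ_old⟩_{BA^{-1}B} − ⟨σ_new, σ_new⟩_{BA^{-1}B}) + (ρ/2)⟨v − ṽ, v − ṽ⟩_A, where ⟨x,y⟩_M = (Mx)·y. -/

import Mathlib

open Matrix

theorem stmt_17 {m : ℕ} (A B : Matrix (Fin m) (Fin m) ℝ)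
    (hA : A.PosDef) (hB : B.PosDef)
    (ρ Δt : ℝ) (hρ : 0 < ρ) (hΔt : 0 < Δt)
    (v vtilde σold σnew : Fin m → ℝ)
    (h : A.mulVec ((ρ / Δt) • (v - vtilde)) = B.mulVec (σold - σnew)) :
    Δt * (B.mulVec σold ⬝ᵥ (v - vtilde))
      = Δt^2 / (2 * ρ) *
          ((B * A⁻¹ * B).mulVec σold ⬝ᵥ σold - (B * A⁻¹ * B).mulVec σnew ⬝ᵥ σnew)
        + ρ / 2 * (A.mulVec (v - vtilde) ⬝ᵥ (v - vtilde)) := by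
  have hρ' : ρ ≠ 0 := hρ.ne'
  have hΔt' : Δt ≠ 0 := hΔt.ne'
  set w := v - vtilde with hw
  set d := σold - σnew with hd
  have hdet : IsUnit A.det := isUnit_iff_ne_zero.mpr hA.det_pos.ne'
  have hinv : A⁻¹ * A = 1 := Matrix.nonsing_inv_mul A hdet
  -- A.mulVec w = (Δt/ρ) • B.mulVec d
  have h1 : A.mulVec w = (Δt / ρ) • B.mulVec d := by
    have h2 : (ρ / Δt) • A.mulVec w = B.mulVec d := by
      rw [← Matrix.mulVec_smul]; exact h
    rw [← h2, smul_smul]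
    field_simp
    rw [one_smul]
  -- w = (Δt/ρ) • A⁻¹ (B d)
  have h2 : w = (Δt / ρ) • A⁻¹.mulVec (B.mulVec d) := by
    have : A⁻¹.mulVec (A.mulVec w) = w := by
      rw [Matrix.mulVec_mulVec, hinv, Matrix.one_mulVec]
    rw [← this, h1, Matrix.mulVec_smul]
  have hAs : Aᵀ = A := hA.isHermitian.eq
  have hBs : Bᵀ = B := hB.isHermitian.eq
  have hAinvs : A⁻¹ᵀ = A⁻¹ := by rw [Matrix.transpose_nonsing_inv, hAs]
  have hsm : ∀ (M : Matrix (Fin m) (Fin m) ℝ), Mᵀ = M → ∀ x y : Fin m → ℝ,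
      M.mulVec x ⬝ᵥ y = x ⬝ᵥ M.mulVec y := by
    intro M hM x y
    rw [Matrix.dotProduct_mulVec, ← Matrix.mulVec_transpose, hM, dotProduct_comm]
  -- symmetry of x ↦ B x ⬝ A⁻¹ B y
  set S : (Fin m → ℝ) → (Fin m → ℝ) → ℝ := fun x y => B.mulVec x ⬝ᵥ A⁻¹.mulVec (B.mulVec y) with hS
  have hsym : ∀ x y, S x y = S y x := by
    intro x y
    simp only [hS]
    rw [dotProduct_comm, hsm A⁻¹ hAinvs]
  -- (B*A⁻¹*B).mulVec x ⬝ᵥ y = S y x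
  have hkey : ∀ x y, (B * A⁻¹ * B).mulVec x ⬝ᵥ y = S y x := by
    intro x y
    simp only [hS]
    rw [← Matrix.mulVec_mulVec, ← Matrix.mulVec_mulVec, hsm B hBs, dotProduct_comm]
  have hbil1 : S σold d = S σold σold - S σold σnew := by
    simp only [hS, hd, Matrix.mulVec_sub, dotProduct_sub, Matrix.mulVec_sub]
  have hbil2 : S d d = S σold σold - 2 * S σold σnew + S σnew σnew := by
    have h3 : S d σold = S σold σold - S σnew σold := by
      simp only [hS, hd, Matrix.mulVec_sub, sub_dotProduct]
    have h4 : S d σnew = S σold σnew - S σnew σnew := by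
      simp only [hS, hd, Matrix.mulVec_sub, sub_dotProduct]
    have h5 : S d d = S d σold - S d σnew := by
      simp only [hS, hd, Matrix.mulVec_sub, dotProduct_sub, Matrix.mulVec_sub]
    rw [h5, h3, h4, hsym σnew σold]; ring
  -- compute both sides
  have hL : B.mulVec σold ⬝ᵥ w = (Δt / ρ) * S σold d := by
    rw [h2, dotProduct_smul, hS]; simp [smul_eq_mul]
  have hR : A.mulVec w ⬝ᵥ w = (Δt / ρ)^2 * S d d := by
    rw [h1, h2, smul_dotProduct, dotProduct_smul, hS]
    simp [smul_eq_mul]; ring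
  rw [hL, hR, hkey σold σold, hkey σnew σnew, hbil1, hbil2]
  field_simp
  ring
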